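/- The function F₂ : ℝ³ → ℝ defined by F₂(s,λ,r) = −(1/16)·sinh(4s)·e^{−8λ} − (1/4)·(16r − s)·e^{8λ} satisfies the partial differential equation ∂³F₂/∂s²∂r + 16·∂³F₂/∂s³ − 16·∂F₂/∂r − 256·∂F₂/∂s = 0 at every point of ℝ³. -/

import Mathlib

/-- The generating function of the genus-2 Donaldson invariants of Σ₂ × ℙ¹:
    F₂(s,λ,r) = −(1/16)·sinh(4s)·e^{−8λ} − (1/4)·(16r − s)·e^{8λ}. -/
noncomputable def F₂ (s l r : ℝ) : ℝ :=
  -(1 / 16) * Real.sinh (4 * s) * Real.exp (-8 * l)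
    - (1 / 4) * (16 * r - s) * Real.exp (8 * l)

/-!
In `s`, `F₂` has the shape `a sinh(4s) + b s + c` with `b = e^{8λ}/4`, so
`∂³F₂/∂s³ = 16 (∂F₂/∂s − b)`, while `∂F₂/∂r = −4 e^{8λ} = −16 b` does not depend on `s`.
Substituting these into the left-hand side, all terms cancel.
-/

open Real

section SinhAddLinear

variable (a k b c : ℝ)

theorem deriv_mul_sinh_add_linear :
    deriv (fun x => a * sinh (k * x) + b * x + c) = fun x => a * k * cosh (k * x) + b := by
  funext x
  have h : HasDerivAt (fun x => a * sinh (k * x) + b * x + c)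
      (a * (cosh (k * x) * (k * 1)) + b * 1) x :=
    ((((hasDerivAt_id' x).const_mul k).sinh.const_mul a).add
      ((hasDerivAt_id' x).const_mul b)).add_const c
  rw [h.deriv]
  ring

theorem deriv_mul_cosh_add_const :
    deriv (fun x => a * cosh (k * x) + b) = fun x => a * k * sinh (k * x) := by
  funext x
  have h : HasDerivAt (fun x => a * cosh (k * x) + b) (a * (sinh (k * x) * (k * 1))) x :=
    (((hasDerivAt_id' x).const_mul k).cosh.const_mul a).add_const b
  rw [h.deriv]
  ring

theorem iteratedDeriv_three_mul_sinh_add_linear :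
    iteratedDeriv 3 (fun x => a * sinh (k * x) + b * x + c) =
      fun x => a * k ^ 3 * cosh (k * x) := by
  rw [iteratedDeriv_succ', iteratedDeriv_succ', iteratedDeriv_one, deriv_mul_sinh_add_linear,
    deriv_mul_cosh_add_const]
  simpa [pow_succ, mul_assoc] using deriv_mul_sinh_add_linear (a * k * k) k 0 0

end SinhAddLinear

theorem F₂_eq_mul_sinh_add_linear (l r : ℝ) :
    (fun s => F₂ s l r) = fun s =>
      -(exp (-8 * l) / 16) * sinh (4 * s) + exp (8 * l) / 4 * s + -4 * exp (8 * l) * r := by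
  funext s
  unfold F₂
  ring

theorem deriv_F₂_r (s l r : ℝ) : deriv (fun r' => F₂ s l r') r = -4 * exp (8 * l) := by
  have h_affine : (fun r' => F₂ s l r') = fun r' => -4 * exp (8 * l) * r' + F₂ s l 0 := by
    funext r'
    unfold F₂
    ring
  rw [h_affine, deriv_add_const, deriv_const_mul_field, deriv_id'', mul_one]

/-- F₂ satisfies ∂³F₂/∂s²∂r + 16·∂³F₂/∂s³ − 16·∂F₂/∂r − 256·∂F₂/∂s = 0 everywhere
    (the relation (γ + 16α)(α² − 16)). -/
theorem F₂_pde_gamma_add_16alpha_mul_alpha_sq_sub_16 (s l r : ℝ) :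
    iteratedDeriv 2 (fun s' => deriv (fun r' => F₂ s' l r') r) s
      + 16 * iteratedDeriv 3 (fun s' => F₂ s' l r) s
      - 16 * deriv (fun r' => F₂ s l r') r
      - 256 * deriv (fun s' => F₂ s' l r) s = 0 := by
  simp only [deriv_F₂_r, iteratedDeriv_const, two_ne_zero, if_false, F₂_eq_mul_sinh_add_linear,
    iteratedDeriv_three_mul_sinh_add_linear, deriv_mul_sinh_add_linear]
  ring
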